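/- Let L₁ and L₂ be regular languages over Σ with L₁ ⊆ ⋃_{α ∈ Σ^κ} Σ*·α·Σ*·overline(α) and L₂ ⊆ ⋃_{α ∈ Σ^κ} α·Σ*·overline(α)·Σ*. If the hairpin completion H_κ(L₁,L₂) is regular, then λ_{H_κ(L₁,L₂)} = max(λ_{L₁}, λ_{L₂}); that is, the growth indicator of the hairpin completion equals the maximum of the growth indicators of L₁ and L₂. -/

import Mathlib

/-- The antimorphic extension of an involution on letters to words. -/
def ovr {σ : Type} (bar : σ → σ) (w : List σ) : List σ := (w.map bar).reverse

/-- The hairpin completion `H_κ(L₁, L₂)`. -/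
def hairpinCompletion {σ : Type} (bar : σ → σ) (κ : ℕ) (L1 L2 : Language σ) :
    Language σ :=
  { π | ∃ γ α β : List σ,
      π = γ ++ α ++ β ++ ovr bar α ++ ovr bar γ ∧
      κ ≤ α.length ∧
      (γ ++ α ++ β ++ ovr bar α ∈ L1 ∨ α ++ β ++ ovr bar α ++ ovr bar γ ∈ L2) }

/-- The canonical factorization `(γ, α, β)` of a word `π` of the hairpin completion. -/
def CanonFact {σ : Type} (bar : σ → σ) (κ : ℕ) (L1 L2 : Language σ)
    (π γ α β : List σ) : Prop :=
  π = γ ++ α ++ β ++ ovr bar α ++ ovr bar γ ∧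
  α.length = κ ∧
  (γ ++ α ++ β ++ ovr bar α ∈ L1 ∨ α ++ β ++ ovr bar α ++ ovr bar γ ∈ L2) ∧
  (∀ u : List σ, u <+: π → u ∈ L1 → u <+: γ ++ α ++ β ++ ovr bar α) ∧
  (∀ u : List σ, u <:+ π → u ∈ L2 → u <:+ α ++ β ++ ovr bar α ++ ovr bar γ)

/-- The language of minimal gamma-alpha-prefixes of words of the hairpin completion. -/
def MGP {σ : Type} (bar : σ → σ) (κ : ℕ) (L1 L2 : Language σ) : Language σ :=
  { p | ∃ π γ α β : List σ, π ∈ hairpinCompletion bar κ L1 L2 ∧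
      CanonFact bar κ L1 L2 π γ α β ∧ p = γ ++ α }

/-- The language of middle factors of canonical factorizations of words
of the hairpin completion. -/
def Mid {σ : Type} (bar : σ → σ) (κ : ℕ) (L1 L2 : Language σ) : Language σ :=
  { β | ∃ π γ α : List σ, π ∈ hairpinCompletion bar κ L1 L2 ∧
      CanonFact bar κ L1 L2 π γ α β }

/-- The growth indicator of a language: the infimum of all `λ ≥ 0` such that
`|L ∩ Σ^m| ≤ c·λ^m` for some constant `c > 0` and all `m`. -/
noncomputable def growthInd {σ : Type} (L : Language σ) : ℝ :=
  sInf { l : ℝ | 0 ≤ l ∧ ∃ c : ℝ, 0 < c ∧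
    ∀ m : ℕ, (Set.ncard { w : List σ | w ∈ L ∧ w.length = m } : ℝ) ≤ c * l ^ m }

/-!
Lower bound: a word `u α v ovr(α)` of `L₁` is a prefix of the word `u α v ovr(α) ovr(u)` of
`H = H_κ(L₁, L₂)`, and dually every word of `L₂` is a suffix of a word of `H`. In a regular language
a word that extends to a word of the language does so by a word of bounded length, so prefixes and
suffixes of `H` are no more numerous than words of `H` of boundedly larger length.

Upper bound: a word of `H` is `p β ovr(p)` with `p = γα`, where `p` is a prefix of a word of `L₁`
or the mirror image of a suffix of a word of `L₂`, and `β` is a factor of a word of `L₁` or `L₂`.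
Prefixes and factors of regular languages grow no faster than the languages, so counting the pairs
`(p, β)` bounds the number of words of length `n` in `H` by `(n + 1) c λⁿ` for each `λ` above
`max(λ_{L₁}, λ_{L₂})`, provided that maximum is at least `1`. Otherwise `L₁` and `L₂` are finite,
and then so is `H`.
-/

open Finset

namespace Language

variable {α : Type*} {L : Language α}

def prefixes (L : Language α) : Language α := {w | ∃ z, w ++ z ∈ L}

def suffixes (L : Language α) : Language α := {w | ∃ z, z ++ w ∈ L}

def wrap (f : List α → List α) (P M : Language α) : Language α :=
  {π | ∃ p ∈ P, ∃ b ∈ M, π = p ++ b ++ f p}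

theorem leftQuotient_prefixes (x : List α) :
    L.prefixes.leftQuotient x = (L.leftQuotient x).prefixes := by
  ext y
  show (∃ z, x ++ y ++ z ∈ L) ↔ ∃ z, x ++ (y ++ z) ∈ L
  simp only [List.append_assoc]

theorem IsRegular.prefixes (h : L.IsRegular) : L.prefixes.IsRegular := by
  rw [isRegular_iff_finite_range_leftQuotient] at h ⊢
  convert h.image Language.prefixes
  ext K
  simp [leftQuotient_prefixes]

theorem suffixes_eq_reverse_prefixes_reverse : L.suffixes = L.reverse.prefixes.reverse := by
  ext w
  simp only [suffixes, prefixes, mem_reverse, List.reverse_append]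
  exact ⟨fun ⟨z, hz⟩ => ⟨z.reverse, by simpa⟩, fun ⟨z, hz⟩ => ⟨z.reverse, by simpa using hz⟩⟩

/-- A regular language has finitely many left quotients: bound the length of a shortest word in
each of them. -/
theorem IsRegular.exists_short_right_completion (h : L.IsRegular) :
    ∃ s, ∀ x y, x ++ y ∈ L → ∃ z : List α, z.length ≤ s ∧ x ++ z ∈ L := by
  classical
  obtain ⟨s, hs⟩ := (h.finite_range_leftQuotient.image
    fun K : Language α => sInf (List.length '' K)).bddAbove
  refine ⟨s, fun x y hxy => ?_⟩
  obtain ⟨z, hz, hzlen⟩ :=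
    Nat.sInf_mem (s := List.length '' L.leftQuotient x) ⟨y.length, y, hxy, rfl⟩
  exact ⟨z, hzlen ▸ hs ⟨_, ⟨x, rfl⟩, rfl⟩, hz⟩

end Language

theorem exists_succ_mul_pow_le {l l' : ℝ} (hl : 0 < l) (hll' : l < l') :
    ∃ C > 0, ∀ n : ℕ, (n + 1) * l ^ n ≤ C * l' ^ n := by
  set a := l' / l - 1
  have ha : 0 < a := by rw [sub_pos, one_lt_div hl]; exact hll'
  refine ⟨1 + 1 / a, by positivity, fun n => ?_⟩
  have bernoulli : 1 + n * a ≤ (l' / l) ^ n := by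
    simpa [a] using one_add_mul_le_pow (by linarith : -2 ≤ a) n
  have hsucc : (n + 1 : ℝ) ≤ (1 + 1 / a) * (1 + n * a) := by
    have : (1 + 1 / a) * (1 + n * a) = n + 1 + (n * a + 1 / a) := by field_simp; ring
    rw [this]; linarith [mul_nonneg n.cast_nonneg ha.le, one_div_pos.2 ha]
  calc (n + 1) * l ^ n ≤ (1 + 1 / a) * (1 + n * a) * l ^ n := by gcongr
    _ ≤ (1 + 1 / a) * (l' / l) ^ n * l ^ n := by gcongr
    _ = (1 + 1 / a) * l' ^ n := by rw [mul_assoc, ← mul_pow, div_mul_cancel₀ _ hl.ne']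

section GrowthBound

variable {σ : Type}

noncomputable def wordCount (L : Language σ) (m : ℕ) : ℕ :=
  {w | w ∈ L ∧ w.length = m}.ncard

def IsGrowthBound (L : Language σ) (l : ℝ) : Prop :=
  0 ≤ l ∧ ∃ c : ℝ, 0 < c ∧ ∀ m, (wordCount L m : ℝ) ≤ c * l ^ m

theorem IsGrowthBound.mono {L : Language σ} {l l' : ℝ} (h : IsGrowthBound L l) (hl : l ≤ l') :
    IsGrowthBound L l' := by
  obtain ⟨hl0, c, hc, hb⟩ := h
  exact ⟨hl0.trans hl, c, hc, fun m => (hb m).trans (by gcongr)⟩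

theorem IsGrowthBound.of_wordCount_le_sum {τ : Type} {A : Language τ} {B : Language σ} {l : ℝ}
    (h : IsGrowthBound B l) (s : ℕ)
    (hAB : ∀ m, wordCount A m ≤ ∑ j ∈ range (s + 1), wordCount B (m + j)) :
    IsGrowthBound A l := by
  obtain ⟨hl0, c, hc, hb⟩ := h
  refine ⟨hl0, c * ∑ j ∈ range (s + 1), l ^ j, by rw [sum_range_succ']; positivity, fun m => ?_⟩
  calc (wordCount A m : ℝ) ≤ ∑ j ∈ range (s + 1), (wordCount B (m + j) : ℝ) := by
        exact_mod_cast hAB m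
    _ ≤ ∑ j ∈ range (s + 1), c * l ^ (m + j) := sum_le_sum fun j _ => hb (m + j)
    _ = _ := by rw [mul_sum, sum_mul]; simp only [pow_add]; ring_nf

theorem IsGrowthBound.of_wordCount_le {τ : Type} {A : Language τ} {B : Language σ} {l : ℝ}
    (h : IsGrowthBound B l)
    (hAB : ∀ m, wordCount A m ≤ wordCount B m) : IsGrowthBound A l :=
  h.of_wordCount_le_sum 0 (by simpa using hAB)

theorem growthInd_eq_sInf (L : Language σ) : growthInd L = sInf {l | IsGrowthBound L l} := rfl

theorem growthInd_le_of_forall_lt {L : Language σ} {Λ : ℝ}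
    (h : ∀ l, Λ < l → IsGrowthBound L l) : growthInd L ≤ Λ :=
  le_of_forall_gt_imp_ge_of_dense fun l hl => csInf_le ⟨0, fun _ hl => hl.1⟩ (h l hl)

end GrowthBound

section Counting

variable {σ : Type} [Fintype σ] {A B L P M : Language σ}

theorem finite_setOf_mem_length_eq (L : Language σ) (m : ℕ) :
    {w | w ∈ L ∧ w.length = m}.Finite :=
  (List.finite_length_eq σ m).subset fun _ hw => hw.2

theorem wordCount_le_card_pow (L : Language σ) (m : ℕ) :
    wordCount L m ≤ Fintype.card σ ^ m := by
  calc wordCount L m ≤ {w : List σ | w.length = m}.ncard :=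
        Set.ncard_le_ncard (fun _ hw => hw.2) (List.finite_length_eq σ m)
    _ = Fintype.card σ ^ m := by
        rw [← Nat.card_coe_set_eq]
        exact (Nat.card_eq_fintype_card (α := List.Vector σ m)).trans (card_vector m)

theorem wordCount_mono (h : A ≤ B) (m : ℕ) : wordCount A m ≤ wordCount B m :=
  Set.ncard_le_ncard (fun _ hw => ⟨h hw.1, hw.2⟩) (finite_setOf_mem_length_eq B m)

theorem wordCount_add_le (m : ℕ) : wordCount (A + B) m ≤ wordCount A m + wordCount B m := by
  refine (Set.ncard_le_ncard (t := {w | w ∈ A ∧ w.length = m} ∪ {w | w ∈ B ∧ w.length = m})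
    ?_ ((finite_setOf_mem_length_eq A m).union (finite_setOf_mem_length_eq B m))).trans
    (Set.ncard_union_le _ _)
  rintro w ⟨hAB, hw⟩
  rcases (Language.mem_add A B w).1 hAB with hA | hB
  exacts [Or.inl ⟨hA, hw⟩, Or.inr ⟨hB, hw⟩]

theorem wordCount_le_of_surjOn {τ : Type} {A : Language τ} {f : List σ → List τ}
    (hf : ∀ w, (f w).length = w.length) (hA : Set.SurjOn f L A) (m : ℕ) :
    wordCount A m ≤ wordCount L m := by
  refine (Set.ncard_le_ncard ?_ ((finite_setOf_mem_length_eq L m).image f)).trans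
    (Set.ncard_image_le (finite_setOf_mem_length_eq L m))
  rintro _ ⟨hw, hm⟩
  obtain ⟨v, hv, rfl⟩ := hA hw
  exact ⟨v, ⟨hv, hf v ▸ hm⟩, rfl⟩

theorem wordCount_prefixes_le {s : ℕ}
    (hs : ∀ x y, x ++ y ∈ L → ∃ z : List σ, z.length ≤ s ∧ x ++ z ∈ L) (m : ℕ) :
    wordCount L.prefixes m ≤ ∑ j ∈ range (s + 1), wordCount L (m + j) := by
  have hcover : {w | w ∈ L.prefixes ∧ w.length = m} ⊆
      ⋃ j ∈ range (s + 1), List.take m '' {w | w ∈ L ∧ w.length = m + j} := by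
    rintro w ⟨⟨y, hy⟩, rfl⟩
    obtain ⟨z, hz, hwz⟩ := hs w y hy
    exact Set.mem_biUnion (x := z.length) (by simpa [Nat.lt_succ_iff] using hz)
      ⟨w ++ z, ⟨hwz, List.length_append⟩, List.take_left' rfl⟩
  calc wordCount L.prefixes m
      ≤ (⋃ j ∈ range (s + 1), List.take m '' {w | w ∈ L ∧ w.length = m + j}).ncard :=
        Set.ncard_le_ncard hcover ((range (s + 1)).finite_toSet.biUnion
          fun j _ => (finite_setOf_mem_length_eq L (m + j)).image _)
    _ ≤ ∑ j ∈ range (s + 1), (List.take m '' {w | w ∈ L ∧ w.length = m + j}).ncard :=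
        Finset.set_ncard_biUnion_le _ _
    _ ≤ _ := sum_le_sum fun j _ => Set.ncard_image_le (finite_setOf_mem_length_eq L (m + j))

theorem wordCount_wrap_le {f : List σ → List σ} (hf : ∀ w, (f w).length = w.length) (n : ℕ) :
    wordCount (Language.wrap f P M) n ≤
      ∑ i ∈ range (n + 1), wordCount P i * wordCount M (n - 2 * i) := by
  set g : List σ × List σ → List σ := fun q => q.1 ++ q.2 ++ f q.1
  have hcover : {π | π ∈ Language.wrap f P M ∧ π.length = n} ⊆
      ⋃ i ∈ range (n + 1), g '' ({p | p ∈ P ∧ p.length = i} ×ˢ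
        {b | b ∈ M ∧ b.length = n - 2 * i}) := by
    rintro _ ⟨⟨p, hp, b, hb, rfl⟩, hn⟩
    simp only [List.length_append, hf] at hn
    exact Set.mem_biUnion (x := p.length) (by simp only [coe_range, Set.mem_Iio]; omega)
      ⟨(p, b), ⟨⟨hp, rfl⟩, hb, show b.length = _ by omega⟩, rfl⟩
  have hfin : ∀ i, ({p | p ∈ P ∧ p.length = i} ×ˢ {b | b ∈ M ∧ b.length = n - 2 * i}).Finite :=
    fun i => (finite_setOf_mem_length_eq P i).prod (finite_setOf_mem_length_eq M _)
  calc wordCount (Language.wrap f P M) n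
      ≤ (⋃ i ∈ range (n + 1), g '' ({p | p ∈ P ∧ p.length = i} ×ˢ
          {b | b ∈ M ∧ b.length = n - 2 * i})).ncard :=
        Set.ncard_le_ncard hcover ((range (n + 1)).finite_toSet.biUnion
          fun i _ => (hfin i).image g)
    _ ≤ _ := Finset.set_ncard_biUnion_le _ _
    _ ≤ _ := sum_le_sum fun i _ => (Set.ncard_image_le (hfin i)).trans Set.ncard_prod.le

end Counting

section GrowthIndicator

variable {σ : Type} [Fintype σ] {A B L P M : Language σ} {l l' : ℝ}

theorem IsGrowthBound.anti (h : IsGrowthBound B l) (hAB : A ≤ B) : IsGrowthBound A l :=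
  h.of_wordCount_le (wordCount_mono hAB)

theorem IsGrowthBound.map {τ : Type} (h : IsGrowthBound L l) (f : σ → τ) :
    IsGrowthBound (Language.map f L) l :=
  h.of_wordCount_le (wordCount_le_of_surjOn (f := List.map f) (fun _ => List.length_map _)
    fun _ hw => hw)

theorem IsGrowthBound.reverse (h : IsGrowthBound L l) : IsGrowthBound L.reverse l :=
  h.of_wordCount_le (wordCount_le_of_surjOn (fun _ => List.length_reverse)
    fun w hw => ⟨w.reverse, hw, w.reverse_reverse⟩)

theorem IsGrowthBound.add (hA : IsGrowthBound A l) (hB : IsGrowthBound B l) :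
    IsGrowthBound (A + B) l := by
  obtain ⟨hl0, cA, hcA, hbA⟩ := hA
  obtain ⟨-, cB, hcB, hbB⟩ := hB
  refine ⟨hl0, cA + cB, by positivity, fun m => ?_⟩
  calc (wordCount (A + B) m : ℝ) ≤ wordCount A m + wordCount B m := by
        exact_mod_cast wordCount_add_le m
    _ ≤ _ := by linarith [hbA m, hbB m]

theorem IsGrowthBound.prefixes (h : IsGrowthBound L l) (hL : L.IsRegular) :
    IsGrowthBound L.prefixes l :=
  let ⟨s, hs⟩ := hL.exists_short_right_completion
  h.of_wordCount_le_sum s (wordCount_prefixes_le hs)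

theorem IsGrowthBound.suffixes (h : IsGrowthBound L l) (hL : L.IsRegular) :
    IsGrowthBound L.suffixes l := by
  rw [Language.suffixes_eq_reverse_prefixes_reverse]
  exact (h.reverse.prefixes hL.reverse).reverse

theorem IsGrowthBound.wrap (hP : IsGrowthBound P l) (hM : IsGrowthBound M l)
    {f : List σ → List σ} (hf : ∀ w, (f w).length = w.length) (hl : 1 ≤ l) (hll' : l < l') :
    IsGrowthBound (Language.wrap f P M) l' := by
  obtain ⟨-, cP, hcP, hbP⟩ := hP
  obtain ⟨-, cM, hcM, hbM⟩ := hM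
  obtain ⟨C, hC, hCb⟩ := exists_succ_mul_pow_le (by linarith) hll'
  refine ⟨by linarith, cP * cM * C, by positivity, fun n => ?_⟩
  calc (wordCount (Language.wrap f P M) n : ℝ)
      ≤ ∑ i ∈ range (n + 1), (wordCount P i : ℝ) * wordCount M (n - 2 * i) := by
        exact_mod_cast wordCount_wrap_le hf n
    _ ≤ ∑ i ∈ range (n + 1), cP * cM * l ^ n := by
        refine sum_le_sum fun i hi => ?_
        have hexp : l ^ i * l ^ (n - 2 * i) ≤ l ^ n := by
          rw [← pow_add]
          exact pow_le_pow_right₀ hl (by rw [mem_range] at hi; omega)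
        calc (wordCount P i : ℝ) * wordCount M (n - 2 * i)
            ≤ (cP * l ^ i) * (cM * l ^ (n - 2 * i)) :=
              mul_le_mul (hbP i) (hbM _) (by positivity) (by positivity)
          _ = cP * cM * (l ^ i * l ^ (n - 2 * i)) := by ring
          _ ≤ cP * cM * l ^ n := by gcongr
    _ = cP * cM * ((n + 1) * l ^ n) := by rw [sum_const, card_range, nsmul_eq_mul]; push_cast; ring
    _ ≤ cP * cM * (C * l' ^ n) := mul_le_mul_of_nonneg_left (hCb n) (by positivity)
    _ = cP * cM * C * l' ^ n := by ring

theorem isGrowthBound_card (L : Language σ) : IsGrowthBound L (Fintype.card σ) :=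
  ⟨by positivity, 1, one_pos, fun m => by rw [one_mul]; exact_mod_cast wordCount_le_card_pow L m⟩

theorem growthInd_nonneg (L : Language σ) : 0 ≤ growthInd L :=
  growthInd_eq_sInf L ▸ le_csInf ⟨_, isGrowthBound_card L⟩ fun _ hl => hl.1

theorem isGrowthBound_of_growthInd_lt (h : growthInd L < l) : IsGrowthBound L l :=
  let ⟨_, hl', hlt⟩ := exists_lt_of_csInf_lt (s := {l | IsGrowthBound L l})
    ⟨_, isGrowthBound_card L⟩ (growthInd_eq_sInf L ▸ h)
  hl'.mono hlt.le

theorem growthInd_le_growthInd (h : ∀ l, IsGrowthBound B l → IsGrowthBound A l) :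
    growthInd A ≤ growthInd B :=
  csInf_le_csInf ⟨0, fun _ hl => hl.1⟩ ⟨_, isGrowthBound_card B⟩ h

theorem exists_length_le_of_growthInd_lt_one (h : growthInd L < 1) :
    ∃ N, ∀ w ∈ L, w.length ≤ N := by
  obtain ⟨l, hgl, hl1⟩ := exists_between h
  obtain ⟨hl0, c, hc, hb⟩ := isGrowthBound_of_growthInd_lt hgl
  obtain ⟨N, hN⟩ := exists_pow_lt_of_lt_one (inv_pos.2 hc) hl1
  refine ⟨N, fun w hw => ?_⟩
  by_contra! hlong
  have hcount : 1 ≤ wordCount L w.length :=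
    (Set.ncard_pos (finite_setOf_mem_length_eq L _)).2 ⟨w, hw, rfl⟩
  have hsmall : c * l ^ w.length < 1 :=
    calc c * l ^ w.length ≤ c * l ^ N :=
        mul_le_mul_of_nonneg_left (pow_le_pow_of_le_one hl0 hl1.le hlong.le) hc.le
      _ < c * c⁻¹ := by gcongr
      _ = 1 := mul_inv_cancel₀ hc.ne'
  exact ((Nat.one_le_cast.2 hcount).trans (hb w.length)).not_gt hsmall

theorem growthInd_eq_zero_of_length_le {N : ℕ} (h : ∀ w ∈ L, w.length ≤ N) :
    growthInd L = 0 := by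
  refine le_antisymm (growthInd_le_of_forall_lt fun ε hε => ?_) (growthInd_nonneg L)
  set c := 1 + ∑ k ∈ range (N + 1), (wordCount L k : ℝ) / ε ^ k
  refine ⟨hε.le, c, by positivity, fun m => ?_⟩
  rcases le_or_gt m N with hm | hm
  · calc (wordCount L m : ℝ) = wordCount L m / ε ^ m * ε ^ m := by field_simp
      _ ≤ c * ε ^ m := by
        gcongr
        refine (single_le_sum (f := fun k => (wordCount L k : ℝ) / ε ^ k)
          (fun k _ => by positivity) (mem_range.2 (by omega))).trans
          (le_add_of_nonneg_left zero_le_one)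
  · have : wordCount L m = 0 := by
      rw [wordCount, Set.ncard_eq_zero (finite_setOf_mem_length_eq L m)]
      ext w
      simp only [Set.mem_ofPred_eq, Set.mem_empty_iff_false, iff_false, not_and]
      intro hw hwm
      exact absurd (h w hw) (by omega)
    rw [this, Nat.cast_zero]
    positivity

end GrowthIndicator

section Hairpin

variable {σ : Type} {bar : σ → σ} {κ : ℕ} {L1 L2 : Language σ}

@[simp]
theorem ovr_append (x y : List σ) : ovr bar (x ++ y) = ovr bar y ++ ovr bar x := by
  simp [ovr]

@[simp]
theorem length_ovr (w : List σ) : (ovr bar w).length = w.length := by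
  simp [ovr]

theorem map_ovr (hbar : Function.Involutive bar) (w : List σ) :
    (ovr bar w).map bar = w.reverse := by
  simp [ovr, List.map_reverse, hbar.comp_self]

theorem ovr_ovr (hbar : Function.Involutive bar) (w : List σ) : ovr bar (ovr bar w) = w := by
  rw [ovr, map_ovr hbar, List.reverse_reverse]

theorem le_prefixes_hairpinCompletion
    (hL1 : ∀ w ∈ L1, ∃ u α v : List σ, α.length = κ ∧ w = u ++ α ++ v ++ ovr bar α) :
    L1 ≤ (hairpinCompletion bar κ L1 L2).prefixes := by
  intro w (hw : w ∈ L1)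
  obtain ⟨u, α, v, hα, rfl⟩ := hL1 w hw
  exact ⟨ovr bar u, u, α, v, rfl, hα.ge, Or.inl hw⟩

theorem le_suffixes_hairpinCompletion (hbar : Function.Involutive bar)
    (hL2 : ∀ w ∈ L2, ∃ α u v : List σ, α.length = κ ∧ w = α ++ u ++ ovr bar α ++ v) :
    L2 ≤ (hairpinCompletion bar κ L1 L2).suffixes := by
  intro w (hw : w ∈ L2)
  obtain ⟨α, u, v, hα, rfl⟩ := hL2 w hw
  refine ⟨ovr bar v, ovr bar v, α, u, by simp [ovr_ovr hbar], hα.ge, Or.inr ?_⟩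
  simpa [ovr_ovr hbar] using hw

theorem hairpinCompletion_le_wrap (hbar : Function.Involutive bar) :
    hairpinCompletion bar κ L1 L2 ≤ Language.wrap (ovr bar)
      (L1.prefixes + (Language.map bar L2.suffixes).reverse)
      (L1.prefixes.suffixes + L2.prefixes.suffixes) := by
  rintro _ ⟨γ, α, β, rfl, -, h1 | h2⟩
  · refine ⟨γ ++ α, Or.inl ⟨β ++ ovr bar α, by simpa using h1⟩, β,
      Or.inl ⟨γ ++ α, ovr bar α, by simpa using h1⟩, by simp⟩
  · refine ⟨γ ++ α, Or.inr ⟨ovr bar α ++ ovr bar γ, ⟨α ++ β, by simpa using h2⟩, ?_⟩, β,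
      Or.inr ⟨α, ovr bar α ++ ovr bar γ, by simpa using h2⟩, by simp⟩
    simp [map_ovr hbar]

theorem length_le_of_mem_hairpinCompletion {N : ℕ} (h1 : ∀ w ∈ L1, w.length ≤ N)
    (h2 : ∀ w ∈ L2, w.length ≤ N) :
    ∀ π ∈ hairpinCompletion bar κ L1 L2, π.length ≤ 2 * N := by
  rintro _ ⟨γ, α, β, rfl, -, h | h⟩
  · have := h1 _ h; simp only [List.length_append, length_ovr] at this ⊢; omega
  · have := h2 _ h; simp only [List.length_append, length_ovr] at this ⊢; omega

end Hairpin

section Main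

variable {σ : Type} [Fintype σ] {bar : σ → σ} {κ : ℕ} {L1 L2 : Language σ}

theorem growthInd_hairpinCompletion_le (hbar : Function.Involutive bar)
    (h1 : L1.IsRegular) (h2 : L2.IsRegular) :
    growthInd (hairpinCompletion bar κ L1 L2) ≤ max (growthInd L1) (growthInd L2) := by
  rcases lt_or_ge (max (growthInd L1) (growthInd L2)) 1 with hlt | hge
  · obtain ⟨N1, hN1⟩ := exists_length_le_of_growthInd_lt_one (max_lt_iff.1 hlt).1
    obtain ⟨N2, hN2⟩ := exists_length_le_of_growthInd_lt_one (max_lt_iff.1 hlt).2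
    rw [growthInd_eq_zero_of_length_le (length_le_of_mem_hairpinCompletion (N := max N1 N2)
      (fun w hw => (hN1 w hw).trans (le_max_left _ _))
      (fun w hw => (hN2 w hw).trans (le_max_right _ _)))]
    exact (growthInd_nonneg L1).trans (le_max_left _ _)
  refine growthInd_le_of_forall_lt fun l' hl' => ?_
  obtain ⟨l, hΛl, hll'⟩ := exists_between hl'
  have hb1 : IsGrowthBound L1 l := isGrowthBound_of_growthInd_lt ((le_max_left _ _).trans_lt hΛl)
  have hb2 : IsGrowthBound L2 l := isGrowthBound_of_growthInd_lt ((le_max_right _ _).trans_lt hΛl)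
  have hP := (hb1.prefixes h1).add ((hb2.suffixes h2).map bar).reverse
  have hM := ((hb1.prefixes h1).suffixes h1.prefixes).add ((hb2.prefixes h2).suffixes h2.prefixes)
  exact (hP.wrap hM (length_ovr (bar := bar)) (hge.trans hΛl.le) hll').anti
    (hairpinCompletion_le_wrap hbar)

theorem max_growthInd_le_growthInd_hairpinCompletion (hbar : Function.Involutive bar)
    (hL1 : ∀ w ∈ L1, ∃ u α v : List σ, α.length = κ ∧ w = u ++ α ++ v ++ ovr bar α)
    (hL2 : ∀ w ∈ L2, ∃ α u v : List σ, α.length = κ ∧ w = α ++ u ++ ovr bar α ++ v)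
    (hreg : (hairpinCompletion bar κ L1 L2).IsRegular) :
    max (growthInd L1) (growthInd L2) ≤ growthInd (hairpinCompletion bar κ L1 L2) :=
  max_le
    (growthInd_le_growthInd fun _ hl =>
      (hl.prefixes hreg).anti (le_prefixes_hairpinCompletion hL1))
    (growthInd_le_growthInd fun _ hl =>
      (hl.suffixes hreg).anti (le_suffixes_hairpinCompletion hbar hL2))

end Main

theorem growth_of_regular_hairpin_completion_general
    {σ : Type} [Fintype σ]
    (bar : σ → σ) (hbar : ∀ a, bar (bar a) = a)
    (κ : ℕ)
    (L1 L2 : Language σ) (h1 : L1.IsRegular) (h2 : L2.IsRegular)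
    (hL1 : ∀ w ∈ L1, ∃ u α v : List σ,
      α.length = κ ∧ w = u ++ α ++ v ++ ovr bar α)
    (hL2 : ∀ w ∈ L2, ∃ α u v : List σ,
      α.length = κ ∧ w = α ++ u ++ ovr bar α ++ v)
    (hreg : (hairpinCompletion bar κ L1 L2).IsRegular) :
    growthInd (hairpinCompletion bar κ L1 L2) =
      max (growthInd L1) (growthInd L2) :=
  le_antisymm (growthInd_hairpinCompletion_le hbar h1 h2)
    (max_growthInd_le_growthInd_hairpinCompletion hbar hL1 hL2 hreg)

theorem growth_of_regular_hairpin_completion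
    {σ : Type} [Fintype σ] (hσ : 2 ≤ Fintype.card σ)
    (bar : σ → σ) (hbar : ∀ a, bar (bar a) = a)
    (κ : ℕ) (hκ : 1 ≤ κ)
    (L1 L2 : Language σ) (h1 : L1.IsRegular) (h2 : L2.IsRegular)
    (hL1 : ∀ w ∈ L1, ∃ u α v : List σ,
      α.length = κ ∧ w = u ++ α ++ v ++ ovr bar α)
    (hL2 : ∀ w ∈ L2, ∃ α u v : List σ,
      α.length = κ ∧ w = α ++ u ++ ovr bar α ++ v)
    (hreg : (hairpinCompletion bar κ L1 L2).IsRegular) :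
    growthInd (hairpinCompletion bar κ L1 L2) =
      max (growthInd L1) (growthInd L2) :=
  growth_of_regular_hairpin_completion_general bar hbar κ L1 L2 h1 h2 hL1 hL2 hreg
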